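/- arXiv:1604.01057 — 2 statements merged into one kernel-verified Lean document; each statement's English description precedes it below -/
import Mathlib

section
/- Let $F$ be a totally real number field of degree $n$ with integral basis $\alpha_1, \dots, \alpha_n$, let $E/F$ be a CM extension, and let $\Phi = \{\sigma_1, \dots, \sigma_n\}$ be a CM type for $E$. Then the compositum of the reflex field $E_\Phi$ with the Galois closure $F^s$ of $F$ equals the compositum $E^{\sigma_1}\cdots E^{\sigma_n}$, which in turn equals the Galois closure $E^s$ of $E$. -/
open Pointwise

/-- The action of the Galois group `Gal(K/ℚ)` on embeddings `E ↪ K` by postcomposition. -/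
noncomputable instance galActionOnEmbeddings (K E' : Type*) [Field K] [Field E']
    [Algebra ℚ K] [Algebra ℚ E'] : MulAction (K ≃ₐ[ℚ] K) (E' →ₐ[ℚ] K) where
  smul σ f := σ.toAlgHom.comp f
  one_smul f := by ext x; rfl
  mul_smul a b f := by ext x; rfl

noncomputable instance (K E' : Type*) [Field K] [Field E'] [Algebra ℚ K] [Algebra ℚ E'] :
    DecidableEq (E' →ₐ[ℚ] K) := Classical.decEq _

/-!
Let `G = Gal(K/ℚ)`. Write an embedding of `E` as `φ = τ|_E` with `τ ∈ G`. If `σ ∈ G` fixes the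
Galois closure `F^s`, then `τ⁻¹στ` fixes `F`; since `Gal(K/E)` has index `[E : F] = 2` in
`Gal(K/F)` and `c` lies in the nontrivial coset, `σ ∘ φ` is either `φ` or `c ∘ φ`. An element of
the stabilizer of `Φ` cannot send `φ ∈ Φ` to `c ∘ φ ∉ Φ`, so it fixes every `φ ∈ Φ`; as `c` is
central and `c ∘ φ ∈ Φ` whenever `φ ∉ Φ`, it then fixes every embedding of `E`, i.e. it fixes
`E^s = K`. Hence both `E_Φ F^s` and `E^{σ₁} ⋯ E^{σₙ}` have trivial fixing group, so both are `K`.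
-/

open IntermediateField Module

theorem Subgroup.mem_or_inv_mul_mem_of_relIndex_eq_two {G : Type*} [Group G] {N H : Subgroup G}
    (h : N.relIndex H = 2) {a b : G} (ha : a ∈ H) (hb : b ∈ H) (hbN : b ∉ N) :
    a ∈ N ∨ b⁻¹ * a ∈ N := by
  have key := Subgroup.mul_mem_iff_of_index_two h (a := ⟨b⁻¹, inv_mem hb⟩) (b := ⟨a, ha⟩)
  simp only [Subgroup.mem_subgroupOf, Subgroup.coe_mul, inv_mem_iff] at key
  tauto

namespace IntermediateField

variable {k K : Type*} [Field k] [Field K] [Algebra k K]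

theorem exists_algEquiv_extend [Normal k K] {L : IntermediateField k K} (f : L →ₐ[k] K) :
    ∃ τ : K ≃ₐ[k] K, ∀ x : L, τ x = f x :=
  ⟨AlgEquiv.ofBijective (f.liftNormal K) (AlgHom.normal_bijective k K K _),
    f.liftNormal_commutes K⟩

theorem eq_top_of_forall_mem_fixingSubgroup_eq_one [FiniteDimensional k K] [IsGalois k K]
    {L : IntermediateField k K} (h : ∀ σ ∈ L.fixingSubgroup, σ = 1) : L = ⊤ := by
  rw [← IsGalois.fixedField_fixingSubgroup L, (Subgroup.eq_bot_iff_forall _).mpr h,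
    fixedField_bot]

theorem mem_fixingSubgroup_normalClosure_iff {L : IntermediateField k K} {σ : K ≃ₐ[k] K} :
    σ ∈ (normalClosure k L K).fixingSubgroup ↔ ∀ f : L →ₐ[k] K, σ.toAlgHom.comp f = f := by
  simp_rw [← Subgroup.zpowers_le, ← le_iff_le, normalClosure_le_iff, le_iff_le,
    Subgroup.zpowers_le, mem_fixingSubgroup_iff, AlgHom.ext_iff]
  simp only [AlgHom.mem_fieldRange, forall_exists_index, forall_apply_eq_imp_iff]
  rfl

theorem relIndex_fixingSubgroup_mul_finrank [IsGalois k K] {F E : IntermediateField k K}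
    (hFE : F ≤ E) : E.fixingSubgroup.relIndex F.fixingSubgroup * finrank k F = finrank k E := by
  rw [finrank_eq_fixingSubgroup_index, finrank_eq_fixingSubgroup_index]
  exact Subgroup.relIndex_mul_index (fixingSubgroup_le hFE)

theorem comp_eq_or_comp_eq_of_mem_fixingSubgroup_normalClosure [FiniteDimensional k K]
    [IsGalois k K] {F E : IntermediateField k K} (hFE : F ≤ E)
    (hdeg : finrank k E = 2 * finrank k F) {c : K ≃ₐ[k] K}
    (hc : c ∈ Subgroup.center (K ≃ₐ[k] K)) (hcF : c ∈ F.fixingSubgroup) {φ : E →ₐ[k] K}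
    (hcφ : c.toAlgHom.comp φ ≠ φ) {σ : K ≃ₐ[k] K}
    (hσ : σ ∈ (normalClosure k F K).fixingSubgroup) :
    σ.toAlgHom.comp φ = φ ∨ σ.toAlgHom.comp φ = c.toAlgHom.comp φ := by
  obtain ⟨τ, hτ⟩ := exists_algEquiv_extend φ
  have hcτ : ∀ x, c (τ x) = τ (c x) := fun x => congr($((Subgroup.mem_center_iff.mp hc τ).symm) x)
  have hrelIndex : E.fixingSubgroup.relIndex F.fixingSubgroup = 2 :=
    Nat.eq_of_mul_eq_mul_right finrank_pos (hdeg ▸ relIndex_fixingSubgroup_mul_finrank hFE)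
  have hcE : c ∉ E.fixingSubgroup := fun hcE => hcφ <| AlgHom.ext fun x => by
    simpa [← hτ, hcτ] using congrArg τ (hcE x)
  have hτστ : τ⁻¹ * σ * τ ∈ F.fixingSubgroup :=
    fixingSubgroup_le (le_normalClosure F) (Subgroup.Normal.conj_mem' inferInstance σ hσ τ)
  rcases Subgroup.mem_or_inv_mul_mem_of_relIndex_eq_two hrelIndex hτστ hcF hcE with h | h
  · left
    ext x
    simpa [← hτ, AlgEquiv.symm_apply_eq] using h x
  · right
    ext x
    simpa [← hτ, AlgEquiv.symm_apply_eq, hcτ] using h x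

def IsCMType {E : IntermediateField k K} (c : K ≃ₐ[k] K) (Φ : Set (E →ₐ[k] K)) : Prop :=
  ∀ φ, φ ∈ Φ ↔ c.toAlgHom.comp φ ∉ Φ

namespace IsCMType

variable {E : IntermediateField k K} {c : K ≃ₐ[k] K} {Φ : Set (E →ₐ[k] K)}

theorem eq_one_of_forall_comp_eq (hΦ : IsCMType c Φ) (hns : normalClosure k E K = ⊤)
    (hc : c ∈ Subgroup.center (K ≃ₐ[k] K)) {σ : K ≃ₐ[k] K}
    (hσ : ∀ φ ∈ Φ, σ.toAlgHom.comp φ = φ) : σ = 1 := by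
  suffices σ ∈ (normalClosure k E K).fixingSubgroup by
    rwa [hns, fixingSubgroup_top, Subgroup.mem_bot] at this
  rw [mem_fixingSubgroup_normalClosure_iff]
  intro φ
  by_cases hφ : φ ∈ Φ
  · exact hσ φ hφ
  · have hσcφ := hσ _ (not_not.mp (mt (hΦ φ).mpr hφ))
    have hcσ : c * σ = σ * c := (Subgroup.mem_center_iff.mp hc σ).symm
    ext x
    apply c.injective
    simpa [← AlgEquiv.mul_apply, hcσ] using congr($hσcφ x)

theorem comp_eq_of_forall_comp_mem [FiniteDimensional k K] [IsGalois k K]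
    (hΦ : IsCMType c Φ) {F : IntermediateField k K} (hFE : F ≤ E)
    (hdeg : finrank k E = 2 * finrank k F) (hc : c ∈ Subgroup.center (K ≃ₐ[k] K))
    (hcF : c ∈ F.fixingSubgroup) {σ : K ≃ₐ[k] K} (hσΦ : ∀ φ ∈ Φ, σ.toAlgHom.comp φ ∈ Φ)
    (hσ : σ ∈ (normalClosure k F K).fixingSubgroup) : ∀ φ ∈ Φ, σ.toAlgHom.comp φ = φ := by
  intro φ hφ
  have hcφ : c.toAlgHom.comp φ ≠ φ := fun h => (hΦ φ).mp hφ (by rwa [h])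
  exact (comp_eq_or_comp_eq_of_mem_fixingSubgroup_normalClosure hFE hdeg hc hcF hcφ
    hσ).resolve_right fun h => (hΦ φ).mp hφ (h ▸ hσΦ φ hφ)

end IsCMType

end IntermediateField

theorem reflex_compositum_eq_conjugate_compositum_general
    {K : Type*} [Field K] [NumberField K] [IsGalois ℚ K]
    (E F : IntermediateField ℚ K) (hFE : F ≤ E)
    (hns : IntermediateField.normalClosure ℚ E K = ⊤)
    (n : ℕ) (hdegF : Module.finrank ℚ F = n)
    (hdegE : Module.finrank ℚ E = 2 * n)
    (c : K ≃ₐ[ℚ] K)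
    (hcentral : ∀ σ : K ≃ₐ[ℚ] K, c * σ = σ * c)
    (hfix : ∀ x : K, x ∈ E → (c x = x ↔ x ∈ F))
    (Φ : Finset (E →ₐ[ℚ] K))
    (hΦ : ∀ φ : E →ₐ[ℚ] K, φ ∈ Φ ↔ c.toAlgHom.comp φ ∉ Φ) :
    IntermediateField.fixedField (MulAction.stabilizer (K ≃ₐ[ℚ] K) Φ) ⊔
        IntermediateField.normalClosure ℚ F K = (⨆ φ ∈ Φ, φ.fieldRange) ∧
    (⨆ φ ∈ Φ, (φ : E →ₐ[ℚ] K).fieldRange) = IntermediateField.normalClosure ℚ E K := by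
  have hc : c ∈ Subgroup.center (K ≃ₐ[ℚ] K) :=
    Subgroup.mem_center_iff.mpr fun σ => (hcentral σ).symm
  have hcF : c ∈ F.fixingSubgroup := fun x => (hfix x (hFE x.2)).mpr x.2
  have hdeg : finrank ℚ E = 2 * finrank ℚ F := by rw [hdegE, hdegF]
  have hcm : IsCMType c (Φ : Set (E →ₐ[ℚ] K)) := hΦ
  have hrange : (⨆ φ ∈ Φ, φ.fieldRange) = ⊤ := by
    refine eq_top_of_forall_mem_fixingSubgroup_eq_one fun σ hσ =>
      hcm.eq_one_of_forall_comp_eq hns hc fun φ hφ => AlgHom.ext fun x => ?_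
    exact hσ ⟨_, le_iSup₂ (f := fun (φ : E →ₐ[ℚ] K) (_ : φ ∈ Φ) => φ.fieldRange) φ hφ ⟨x, rfl⟩⟩
  have hreflex : fixedField (MulAction.stabilizer (K ≃ₐ[ℚ] K) Φ) ⊔ normalClosure ℚ F K = ⊤ := by
    refine eq_top_of_forall_mem_fixingSubgroup_eq_one fun σ hσ => ?_
    rw [fixingSubgroup_sup, fixingSubgroup_fixedField] at hσ
    have hσΦ : ∀ φ ∈ Φ, σ.toAlgHom.comp φ ∈ Φ := fun φ hφ =>
      (MulAction.mem_stabilizer_iff.mp hσ.1) ▸ Finset.smul_mem_smul_finset hφ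
    exact hcm.eq_one_of_forall_comp_eq hns hc
      (hcm.comp_eq_of_forall_comp_mem hFE hdeg hc hcF hσΦ hσ.2)
  exact ⟨by rw [hreflex, hrange], by rw [hrange, hns]⟩

/-- Let `F` be a totally real field of degree `n`, `E/F` a CM extension (with
complex conjugation `c`, a central involution of the Galois closure `K = E^s` whose fixed
subfield of `E` is exactly `F`), and `Φ = {σ₁, …, σₙ}` a CM type for `E`.  Then the compositum
of the reflex field `E_Φ` (the fixed field of the stabilizer of `Φ` in `Gal(E^s/ℚ)`) with the
Galois closure `F^s` of `F` equals the compositum `E^{σ₁} ⋯ E^{σₙ}` of the images of the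
embeddings in `Φ`, which in turn equals the Galois closure `E^s` of `E`. -/
theorem reflex_compositum_eq_conjugate_compositum
    {K : Type*} [Field K] [NumberField K] [IsGalois ℚ K]
    (E F : IntermediateField ℚ K) (hFE : F ≤ E)
    (hns : IntermediateField.normalClosure ℚ E K = ⊤)
    (n : ℕ) (hn : 1 ≤ n) (hdegF : Module.finrank ℚ F = n)
    (hdegE : Module.finrank ℚ E = 2 * n)
    (hF : ∀ φ : F →+* ℂ, ∀ x : F, (φ x).im = 0)
    (c : K ≃ₐ[ℚ] K) (hc : ∀ x, c (c x) = x)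
    (hcentral : ∀ σ : K ≃ₐ[ℚ] K, c * σ = σ * c)
    (hfix : ∀ x : K, x ∈ E → (c x = x ↔ x ∈ F))
    (Φ : Finset (E →ₐ[ℚ] K))
    (hΦ : ∀ φ : E →ₐ[ℚ] K, φ ∈ Φ ↔ c.toAlgHom.comp φ ∉ Φ) :
    IntermediateField.fixedField (MulAction.stabilizer (K ≃ₐ[ℚ] K) Φ) ⊔
        IntermediateField.normalClosure ℚ F K = (⨆ φ ∈ Φ, φ.fieldRange) ∧
    (⨆ φ ∈ Φ, (φ : E →ₐ[ℚ] K).fieldRange) = IntermediateField.normalClosure ℚ E K :=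
  reflex_compositum_eq_conjugate_compositum_general E F hFE hns n hdegF hdegE c hcentral hfix Φ hΦ
end

section
/- Let $E$ be a Weyl CM field of degree $2g$, i.e., a CM field with $\mathrm{Gal}(E^s/\mathbb{Q}) \cong W_{2g}$ of order $2^g g!$. Fix the CM type $\Phi = \{\tau_1, \dots, \tau_g\}$ where $\tau_i(\alpha) = \alpha_i$ picks one root from each conjugate pair. Then the stabilizer of $\Phi$ in $\mathrm{Gal}(E^s/\mathbb{Q})$ has order exactly $g!$, and consequently the reflex field $E_\Phi$ has degree $[E_\Phi : \mathbb{Q}] = 2^g$. -/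
/-!
The Galois orbit of `Φ` consists of CM types because `c` is central, and a CM type is determined
by its intersection with `Φ`, so the orbit has at most `2 ^ g` elements. An element of the
stabilizer fixing `Φ` pointwise also fixes `c • Φ`, hence every embedding, hence the normal
closure `K` of `E`; so the stabilizer embeds into the permutations of `Φ` and has at most `g!`
elements. Since orbit times stabilizer is `2 ^ g * g!`, both bounds are equalities, and the degree
of the reflex field is the index of the stabilizer, i.e. the size of the orbit.
-/

open Pointwise

section CMType

open MulAction Finset Nat

variable {G X : Type*} [Group G] [MulAction G X]

/-- `c` plays the role of complex conjugation. -/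
def IsCMType (c : G) (S : Finset X) : Prop := ∀ x, x ∈ S ↔ c • x ∉ S

namespace IsCMType

variable {c : G} {S : Finset X}

theorem smul_eq_compl [DecidableEq X] [Fintype X] (hS : IsCMType c S) : c • S = Sᶜ := by
  ext x
  rw [← inv_smul_mem_iff, hS, smul_inv_smul, mem_compl]

theorem two_mul_card [DecidableEq X] [Fintype X] (hS : IsCMType c S) :
    2 * #S = Nat.card X := by
  rw [Nat.card_eq_fintype_card, ← card_add_card_compl S, ← hS.smul_eq_compl, card_smul_finset,
    two_mul]

theorem inv_smul_mem_of_notMem (hS : IsCMType c S) {x : X} (hx : x ∉ S) : c⁻¹ • x ∈ S := by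
  rwa [hS, smul_inv_smul]

theorem smul [DecidableEq X] (hS : IsCMType c S) {σ : G} (hσ : Commute c σ) :
    IsCMType c (σ • S) := by
  intro x
  rw [← inv_smul_mem_iff, ← inv_smul_mem_iff, smul_smul, ← hσ.inv_right.eq, ← smul_smul, hS]

theorem eq_of_inter_eq [DecidableEq X] {T T' : Finset X} (hS : IsCMType c S) (hT : IsCMType c T)
    (hT' : IsCMType c T') (h : T ∩ S = T' ∩ S) : T = T' := by
  have hmem : ∀ x ∈ S, x ∈ T ↔ x ∈ T' := fun x hx => by
    simpa [hx] using congrArg (x ∈ ·) h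
  ext x
  by_cases hx : x ∈ S
  · exact hmem x hx
  · rw [← smul_inv_smul c x, ← not_iff_not, ← hT, ← hT']
    exact hmem _ (hS.inv_smul_mem_of_notMem hx)

theorem smul_eq_self_of_forall_mem (hS : IsCMType c S) {σ : G} (hσ : Commute c σ)
    (h : ∀ x ∈ S, σ • x = x) (x : X) : σ • x = x := by
  by_cases hx : x ∈ S
  · exact h x hx
  · rw [← smul_inv_smul c x, smul_smul, ← hσ.eq, mul_smul, h _ (hS.inv_smul_mem_of_notMem hx)]

theorem ncard_orbit_le [DecidableEq X] (hS : IsCMType c S) (hc : ∀ σ : G, Commute c σ) :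
    (orbit G S).ncard ≤ 2 ^ #S := by
  rw [← card_powerset, ← Set.ncard_coe_finset]
  refine Set.ncard_le_ncard_of_injOn (· ∩ S) (fun T _ => by simp) ?_
  rintro _ ⟨σ, rfl⟩ _ ⟨τ, rfl⟩ h
  exact eq_of_inter_eq hS (hS.smul (hc σ)) (hS.smul (hc τ)) h

theorem faithfulSMul_stabilizer [FaithfulSMul G X] (hS : IsCMType c S)
    (hc : ∀ σ : G, Commute c σ) :
    FaithfulSMul (stabilizer G (S : Set X)) (S : Set X) := by
  rw [faithfulSMul_iff]
  intro σ hσ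
  rw [Subtype.ext_iff, Subgroup.coe_one, ← (faithfulSMul_iff (α := X)).mp ‹_›]
  exact smul_eq_self_of_forall_mem hS (hc σ) fun x hx => congrArg Subtype.val (hσ ⟨x, hx⟩)

theorem card_stabilizer_le [DecidableEq X] [FaithfulSMul G X] (hS : IsCMType c S)
    (hc : ∀ σ : G, Commute c σ) : Nat.card (stabilizer G S) ≤ (#S)! := by
  have := hS.faithfulSMul_stabilizer hc
  rw [← stabilizer_coe_finset, ← Set.ncard_coe_finset, ← Nat.card_coe_set_eq, ← Nat.card_perm]
  exact Nat.card_le_card_of_injective _ toPerm_injective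

theorem ncard_orbit_eq_and_card_stabilizer_eq [DecidableEq X] [Finite X] [FaithfulSMul G X]
    (hS : IsCMType c S) (hc : ∀ σ : G, Commute c σ) (hG : Nat.card G = 2 ^ #S * (#S)!) :
    (orbit G S).ncard = 2 ^ #S ∧ Nat.card (stabilizer G S) = (#S)! := by
  have horbit_stabilizer : (orbit G S).ncard * Nat.card (stabilizer G S) = Nat.card G := by
    rw [← index_stabilizer, Subgroup.index_mul_card]
  rw [← mul_eq_mul_iff_eq_and_eq_of_pos (hS.ncard_orbit_le hc) (hS.card_stabilizer_le hc)
    ((Set.ncard_pos).mpr ⟨S, mem_orbit_self S⟩) (factorial_pos _), horbit_stabilizer, hG]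

end IsCMType

end CMType

theorem AlgHom.natCard_of_normal {F K E : Type*} [Field F] [Field K] [Field E]
    [Algebra F K] [Algebra F E] [Algebra E K] [IsScalarTower F E K] [Normal F K]
    [FiniteDimensional F E] [Algebra.IsSeparable F E] :
    Nat.card (E →ₐ[F] K) = Module.finrank F E :=
  AlgHom.natCard_of_splits F E K fun x => by
    rw [← minpoly.algebraMap_eq (algebraMap E K).injective x]
    exact Normal.splits inferInstance _

theorem IntermediateField.finrank_fixedField_eq_index {F K : Type*} [Field F] [Field K]
    [Algebra F K] [FiniteDimensional F K] [IsGalois F K] (H : Subgroup (K ≃ₐ[F] K)) :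
    Module.finrank F (fixedField H) = H.index := by
  rw [finrank_eq_fixingSubgroup_index, fixingSubgroup_fixedField]

theorem faithfulSMul_algHom_of_normalClosure_eq_top {K : Type*} [Field K] [Algebra ℚ K]
    (E : IntermediateField ℚ K) (hE : IntermediateField.normalClosure ℚ E K = ⊤) :
    FaithfulSMul (K ≃ₐ[ℚ] K) (E →ₐ[ℚ] K) := by
  rw [faithfulSMul_iff]
  intro σ hσ
  have hfixed : IntermediateField.normalClosure ℚ E K ≤
      IntermediateField.fixedField (Subgroup.zpowers σ) := by
    rw [normalClosure_le_iff]
    rintro f _ ⟨y, rfl⟩ ⟨τ, hτ⟩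
    have hσ_fixes : σ ∈ MulAction.stabilizer (K ≃ₐ[ℚ] K) (f y) := AlgHom.congr_fun (hσ f) y
    exact Subgroup.zpowers_le.mpr hσ_fixes hτ
  ext x
  exact hfixed (hE ▸ IntermediateField.mem_top) ⟨σ, Subgroup.mem_zpowers σ⟩

theorem weyl_cm_stabilizer_card_and_reflex_degree_general
    {K : Type*} [Field K] [NumberField K] [IsGalois ℚ K]
    (E : IntermediateField ℚ K) (hns : IntermediateField.normalClosure ℚ E K = ⊤)
    (g : ℕ) (hdeg : Module.finrank ℚ E = 2 * g)
    (c : K ≃ₐ[ℚ] K)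
    (hcentral : ∀ σ : K ≃ₐ[ℚ] K, c * σ = σ * c)
    (hweyl : Nat.card (K ≃ₐ[ℚ] K) = 2 ^ g * Nat.factorial g)
    (Φ : Finset (E →ₐ[ℚ] K))
    (hΦ : ∀ φ : E →ₐ[ℚ] K, φ ∈ Φ ↔ c.toAlgHom.comp φ ∉ Φ) :
    Nat.card (MulAction.stabilizer (K ≃ₐ[ℚ] K) Φ) = Nat.factorial g ∧
    Module.finrank ℚ (IntermediateField.fixedField (MulAction.stabilizer (K ≃ₐ[ℚ] K) Φ)) =
      2 ^ g := by
  have hCM : IsCMType c Φ := hΦ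
  have := faithfulSMul_algHom_of_normalClosure_eq_top E hns
  have hcard : Φ.card = g := by
    have := hCM.two_mul_card
    rw [AlgHom.natCard_of_normal, hdeg] at this
    omega
  obtain ⟨horbit, hstab⟩ :=
    hCM.ncard_orbit_eq_and_card_stabilizer_eq hcentral (by rw [hcard, hweyl])
  rw [hcard] at horbit hstab
  rw [IntermediateField.finrank_fixedField_eq_index, MulAction.index_stabilizer]
  exact ⟨hstab, horbit⟩

/-- Let `E` be a Weyl CM field of degree `2g`: a CM field whose Galois closure
`K = E^s` has Galois group (isomorphic to the hyperoctahedral group `W_{2g}`, hence) of order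
`2^g · g!`, with complex conjugation `c` a central involution of `K`.  Fix a CM type `Φ`
(choosing one embedding from each conjugate pair).  Then the stabilizer of `Φ` in
`Gal(E^s/ℚ)` has order exactly `g!`, and consequently the reflex field `E_Φ` (the fixed field
of this stabilizer) has degree `[E_Φ : ℚ] = 2^g`. -/
theorem weyl_cm_stabilizer_card_and_reflex_degree
    {K : Type*} [Field K] [NumberField K] [IsGalois ℚ K]
    (E : IntermediateField ℚ K) (hns : IntermediateField.normalClosure ℚ E K = ⊤)
    (g : ℕ) (hg : 1 ≤ g) (hdeg : Module.finrank ℚ E = 2 * g)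
    (c : K ≃ₐ[ℚ] K) (hc : ∀ x, c (c x) = x)
    (hcentral : ∀ σ : K ≃ₐ[ℚ] K, c * σ = σ * c)
    (hweyl : Nat.card (K ≃ₐ[ℚ] K) = 2 ^ g * Nat.factorial g)
    (Φ : Finset (E →ₐ[ℚ] K))
    (hΦ : ∀ φ : E →ₐ[ℚ] K, φ ∈ Φ ↔ c.toAlgHom.comp φ ∉ Φ) :
    Nat.card (MulAction.stabilizer (K ≃ₐ[ℚ] K) Φ) = Nat.factorial g ∧
    Module.finrank ℚ (IntermediateField.fixedField (MulAction.stabilizer (K ≃ₐ[ℚ] K) Φ)) =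
      2 ^ g :=
  weyl_cm_stabilizer_card_and_reflex_degree_general E hns g hdeg c hcentral hweyl Φ hΦ
end
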